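/- arXiv:2503.00959 — 6 statements merged into one kernel-verified Lean document; each statement's English description precedes it below -/
import Mathlib

section
/- For every Dirichlet character χ modulo N and every complex s with Re(s) ≥ 1, if χ is nontrivial or s ≠ 1, then L(χ, s) ≠ 0. -/
theorem dirichlet_LFunction_ne_zero_of_one_le_re {N : ℕ} [NeZero N]
    (χ : DirichletCharacter ℂ N) {s : ℂ} (hχs : χ ≠ 1 ∨ s ≠ 1) (hs : 1 ≤ s.re) :
    χ.LFunction s ≠ 0 :=
  χ.LFunction_ne_zero_of_one_le_re hχs hs
end

section
/- If χ is a quadratic (real-valued, nontrivial) Dirichlet character, then L(χ, 1) ≠ 0. -/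
theorem quadratic_LFunction_one_ne_zero_general {N : ℕ} [NeZero N]
    (χ : DirichletCharacter ℂ N) (hχ : χ ≠ 1) :
    χ.LFunction 1 ≠ 0 :=
  DirichletCharacter.LFunction_apply_one_ne_zero hχ

theorem quadratic_LFunction_one_ne_zero {N : ℕ} [NeZero N]
    (χ : DirichletCharacter ℂ N) (hχ : χ ≠ 1)
    (hquad : ∀ n : ZMod N, χ n = -1 ∨ χ n = 0 ∨ χ n = 1) :
    χ.LFunction 1 ≠ 0 :=
  quadratic_LFunction_one_ne_zero_general χ hχ
end

section
/- Let f : ℕ → ℂ with f(1) > 0 (real and positive) and f(n) ≥ 0 (real and nonnegative) for all n, and suppose the L-series of f, L(f, s) = ∑_{n≥1} f(n) n^{−s}, converges somewhere and extends to an entire function F with F(s) = L(f,s) on the region of convergence. Then F takes positive real values at every real number. -/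
open LSeries
open scoped ComplexOrder

theorem LSeries_entire_extension_positive_on_reals {f : ℕ → ℂ}
    (hf₀ : 0 ≤ f) (hf₁ : 0 < f 1) {F : ℂ → ℂ} (hF : Differentiable ℂ F)
    {x : ℝ} (hx : abscissaOfAbsConv f ≤ x)
    (hF' : Set.EqOn F (LSeries f) {s : ℂ | x < s.re}) :
    ∀ y : ℝ, 0 < F y :=
  positive_of_differentiable_of_eqOn hf₀ hf₁ hF hx hF'
end

section
/- For coprime a and q, the sum ∑_{n ≡ a mod q} Λ(n)/n diverges, where Λ is the von Mangoldt function. -/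
open ArithmeticFunction

theorem not_summable_vonMangoldt_div_residueClass {q : ℕ} [NeZero q] {a : ZMod q}
    (ha : IsUnit a) :
    ¬ Summable (fun n : ℕ => if (n : ZMod q) = a then Λ n / n else 0) := by
  intro hsum
  apply vonMangoldt.not_summable_residueClass_prime_div ha
  refine (hsum.indicator {n | n.Prime}).congr fun n => ?_
  by_cases hn : n.Prime <;> by_cases hna : (n : ZMod q) = a <;>
    simp [hn, hna, vonMangoldt.residueClass]
end

section
/- The value of (Mathlib's) Riemann zeta function at s = 1 equals (γ − log(4π))/2, where γ is the Euler–Mascheroni constant; in particular ζ(1) ≠ 0. -/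
open Real

theorem riemannZeta_one_value :
    riemannZeta 1 = ((Real.eulerMascheroniConstant : ℂ) - Complex.log (4 * π)) / 2 ∧
      riemannZeta 1 ≠ 0 :=
  ⟨riemannZeta_one, riemannZeta_one_ne_zero⟩
end

section
/- Let f, g : (0,∞) → ℂ be locally integrable, suppose f(x) = c_f + O(x^{−B}) and g(x) = c_g + O(x^{−B}) for all B > 0 as x → ∞ (rapid decay to constants c_f, c_g), and suppose f(1/x) = ε x^k g(x) for some real k > 0 and nonzero complex ε. Then the Mellin transforms M f(s) = ∫₀^∞ t^{s−1}(f(t) − c_f) dt and M g(s) (defined analogously) extend to meromorphic functions on ℂ, holomorphic away from s ∈ {0, k}, and satisfy M f(k − s) = ε · M g(s). -/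
/-!
Split the Mellin integral at `t = 1`. The piece over `(1, ∞)` is entire by the rapid decay of
`f - cf`; on `(0, 1)` the substitution `t ↦ 1 / t` and the functional equation turn it into the
corresponding integral of `g - cg` over `(1, ∞)`, up to the explicit polar terms `cf / s` and
`ε cg / (k - s)`. The resulting continuation is Mathlib's `WeakFEPair.Λ`.
-/

open Real Complex MeasureTheory Set Asymptotics Filter

lemma isBigO_rpow_rpow_atTop_of_le {a b : ℝ} (hab : a ≤ b) :
    (fun x : ℝ => x ^ a) =O[atTop] (fun x : ℝ => x ^ b) := by
  refine IsBigO.of_bound 1 ?_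
  filter_upwards [eventually_ge_atTop (1 : ℝ)] with x hx
  have hx₀ : 0 ≤ x := zero_le_one.trans hx
  rw [one_mul, norm_of_nonneg (rpow_nonneg hx₀ a), norm_of_nonneg (rpow_nonneg hx₀ b)]
  exact rpow_le_rpow_of_exponent_le hx hab

lemma isBigO_rpow_atTop_of_forall_pos {E : Type*} [Norm E] {h : ℝ → E}
    (hh : ∀ B : ℝ, 0 < B → h =O[atTop] (fun x : ℝ => x ^ (-B))) (r : ℝ) :
    h =O[atTop] (· ^ r) :=
  (hh _ (one_pos.trans_le (le_max_left 1 (-r)))).trans <|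
    isBigO_rpow_rpow_atTop_of_le (neg_le.mp (le_max_right 1 (-r)))

lemma WeakFEPair.differentiableOn_Λ {E : Type*} [NormedAddCommGroup E] [NormedSpace ℂ E]
    (P : WeakFEPair E) : DifferentiableOn ℂ P.Λ {(0 : ℂ), (P.k : ℂ)}ᶜ := by
  intro s hs
  simp only [mem_compl_iff, mem_insert_iff, mem_singleton_iff, not_or] at hs
  exact (P.differentiableAt_Λ (Or.inl hs.1) (Or.inl hs.2)).differentiableWithinAt

theorem weak_FE_pair_functional_equation
    {f g : ℝ → ℂ} {cf cg : ℂ} {k : ℝ} {ε : ℂ}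
    (hf_int : LocallyIntegrableOn f (Ioi 0))
    (hg_int : LocallyIntegrableOn g (Ioi 0))
    (hk : 0 < k) (hε : ε ≠ 0)
    (hf_top : ∀ B : ℝ, 0 < B → (fun x => f x - cf) =O[atTop] (fun x : ℝ => x ^ (-B)))
    (hg_top : ∀ B : ℝ, 0 < B → (fun x => g x - cg) =O[atTop] (fun x : ℝ => x ^ (-B)))
    (h_feq : ∀ x ∈ Ioi (0 : ℝ), f (1 / x) = ε * (x : ℂ) ^ (k : ℂ) * g x) :
    ∃ Mf Mg : ℂ → ℂ,
      (∀ s : ℂ, k < s.re → Mf s = mellin (fun t => f t - cf) s) ∧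
      (∀ s : ℂ, k < s.re → Mg s = mellin (fun t => g t - cg) s) ∧
      DifferentiableOn ℂ Mf {(0 : ℂ), (k : ℂ)}ᶜ ∧
      DifferentiableOn ℂ Mg {(0 : ℂ), (k : ℂ)}ᶜ ∧
      ∀ s : ℂ, Mf ((k : ℂ) - s) = ε * Mg s := by
  let P : WeakFEPair ℂ :=
    { f := f, g := g, k := k, ε := ε, f₀ := cf, g₀ := cg,
      hf_int := hf_int, hg_int := hg_int, hk := hk, hε := hε,
      h_feq := fun x hx => by rw [h_feq x hx, smul_eq_mul, ofReal_cpow hx.le]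
      hf_top := isBigO_rpow_atTop_of_forall_pos hf_top
      hg_top := isBigO_rpow_atTop_of_forall_pos hg_top }
  exact ⟨P.Λ, P.symm.Λ, fun s hs => (P.hasMellin hs).2.symm,
    fun s hs => (P.symm.hasMellin hs).2.symm, P.differentiableOn_Λ, P.symm.differentiableOn_Λ,
    P.functional_equation⟩
end
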